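/- arXiv:math/0007109 — 2 statements merged into one kernel-verified Lean document; each statement's English description precedes it below -/
import Mathlib

section
/- Let α be a partial action of a topological group G on a topological space X, and let X̃ = (G × X)/∼ with quotient map q, where (r,x) ∼ (s,y) iff x ∈ X_{r⁻¹s} and α_{s⁻¹r}(x) = y. Then the prescription α̃_s(q(t,x)) = q(st,x) is well defined (it does not depend on the chosen representative of the class q(t,x)) and yields a continuous action α̃ : G × X̃ → X̃ of G on X̃, i.e. α̃ is jointly continuous, α̃_e = id, and α̃_s ∘ α̃_t = α̃_{st} for all s,t ∈ G. -/
/-!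
Left translation `(t, x) ↦ (s * t, x)` preserves `∼`, since `(r, x) ∼ (t, y)` depends only on
`r⁻¹ * t`; so it descends to a global action of `G` on `X̃`, and the action axioms hold already
upstairs. Joint continuity reduces to continuity upstairs once `id × q` is a quotient map, which
holds because `q` is open: the saturation of an open `U` is the union over `t ∈ G` of the open
sets `{(r, x) | x ∈ X_{r⁻¹ t}, (t, α_{t⁻¹ r} x) ∈ U}`.
-/

structure TopPartialAction (G : Type*) (X : Type*) [Group G] [TopologicalSpace G]
    [IsTopologicalGroup G] [TopologicalSpace X] where
  dom : G → Set X
  act : G → X → X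
  isOpen_dom : ∀ t, IsOpen (dom t)
  bijOn : ∀ t, Set.BijOn (act t) (dom t⁻¹) (dom t)
  isOpen_graph : IsOpen {p : G × X | p.2 ∈ dom p.1⁻¹}
  continuousOn : ContinuousOn (fun p : G × X => act p.1 p.2) {p : G × X | p.2 ∈ dom p.1⁻¹}
  dom_one : dom 1 = Set.univ
  act_one : ∀ x, act 1 x = x
  act_comp : ∀ s t x, x ∈ dom t⁻¹ → act t x ∈ dom s⁻¹ →
    x ∈ dom (s * t)⁻¹ ∧ act (s * t) x = act s (act t x)

/-- The relation `(r, x) ∼ (s, y) ↔ x ∈ X_{r⁻¹ s} ∧ α_{s⁻¹ r}(x) = y` on `G × X`. -/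
def TopPartialAction.rel {G X : Type*} [Group G] [TopologicalSpace G] [IsTopologicalGroup G]
    [TopologicalSpace X] (α : TopPartialAction G X) (p q : G × X) : Prop :=
  p.2 ∈ α.dom (p.1⁻¹ * q.1) ∧ α.act (q.1⁻¹ * p.1) p.2 = q.2

namespace TopPartialAction

variable {G X : Type*} [Group G] [TopologicalSpace G] [IsTopologicalGroup G]
  [TopologicalSpace X] (α : TopPartialAction G X)

section PartialAction

variable {α} {t : G} {x : X}

lemma act_mem_dom (hx : x ∈ α.dom t⁻¹) : α.act t x ∈ α.dom t :=
  (α.bijOn t).mapsTo hx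

lemma act_inv_act (hx : x ∈ α.dom t⁻¹) : α.act t⁻¹ (α.act t x) = x := by
  have h := α.act_comp t⁻¹ t x hx (by simpa using act_mem_dom hx)
  rw [inv_mul_cancel, α.act_one] at h
  exact h.2.symm

lemma rel_mk_iff {r s : G} {x y : X} :
    α.rel (r, x) (s, y) ↔ x ∈ α.dom (s⁻¹ * r)⁻¹ ∧ α.act (s⁻¹ * r) x = y := by
  simp [rel, mul_inv_rev]

end PartialAction

lemma rel_refl (p : G × X) : α.rel p p := by
  simp [rel, α.dom_one, α.act_one]

lemma rel_symm {p q : G × X} (h : α.rel p q) : α.rel q p := by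
  obtain ⟨r, x⟩ := p; obtain ⟨s, y⟩ := q
  obtain ⟨hx, rfl⟩ := α.rel_mk_iff.1 h
  refine ⟨by simpa using act_mem_dom hx, ?_⟩
  simpa using act_inv_act hx

lemma rel_trans {p q r : G × X} (hpq : α.rel p q) (hqr : α.rel q r) : α.rel p r := by
  obtain ⟨g, x⟩ := p; obtain ⟨h, y⟩ := q; obtain ⟨k, z⟩ := r
  obtain ⟨hx, rfl⟩ := α.rel_mk_iff.1 hpq
  obtain ⟨hy, rfl⟩ := α.rel_mk_iff.1 hqr
  have hcomp := α.act_comp _ _ _ hx hy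
  rw [mul_assoc, mul_inv_cancel_left] at hcomp
  exact α.rel_mk_iff.2 hcomp

lemma rel_equivalence : Equivalence α.rel :=
  ⟨α.rel_refl, α.rel_symm, α.rel_trans⟩

lemma rel_mul_left (s : G) {p q : G × X} (h : α.rel p q) :
    α.rel (s * p.1, p.2) (s * q.1, q.2) := by
  simpa [rel, mul_assoc] using h

lemma isOpen_setOf_act_mem {V : Set X} (hV : IsOpen V) :
    IsOpen {p : G × X | p.2 ∈ α.dom p.1⁻¹ ∧ α.act p.1 p.2 ∈ V} :=
  α.continuousOn.isOpen_inter_preimage α.isOpen_graph hV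

lemma preimage_image_mk (U : Set (G × X)) :
    Quot.mk α.rel ⁻¹' (Quot.mk α.rel '' U) =
      ⋃ t : G, (fun q : G × X => (t⁻¹ * q.1, q.2)) ⁻¹'
        {p | p.2 ∈ α.dom p.1⁻¹ ∧ α.act p.1 p.2 ∈ {y | (t, y) ∈ U}} := by
  ext q
  simp only [Set.mem_preimage, Set.mem_image, Set.mem_iUnion, Set.mem_ofPred_eq,
    α.rel_equivalence.quot_mk_eq_iff]
  constructor
  · rintro ⟨p, hpU, hpq⟩
    obtain ⟨hq, hqp⟩ := α.rel_mk_iff.1 (α.rel_symm hpq)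
    exact ⟨p.1, hq, by rwa [hqp]⟩
  · rintro ⟨t, hq, hqU⟩
    exact ⟨_, hqU, α.rel_symm (α.rel_mk_iff.2 ⟨hq, rfl⟩)⟩

lemma isOpenQuotientMap_mk : IsOpenQuotientMap (Quot.mk α.rel) := by
  refine ⟨Quot.mk_surjective, continuous_quot_mk, fun U hU => ?_⟩
  rw [← isQuotientMap_quot_mk.isOpen_preimage, preimage_image_mk]
  exact isOpen_iUnion fun t =>
    (α.isOpen_setOf_act_mem (hU.preimage (.prodMk_right t))).preimage (by fun_prop)

instance : SMul G (Quot α.rel) where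
  smul s := Quot.map (fun p => (s * p.1, p.2)) fun _ _ => α.rel_mul_left s

lemma smul_mk (s : G) (p : G × X) :
    s • Quot.mk α.rel p = Quot.mk α.rel (s * p.1, p.2) :=
  rfl

instance : MulAction G (Quot α.rel) where
  one_smul := Quot.ind fun p => by rw [smul_mk, one_mul]
  mul_smul s t := Quot.ind fun p => by simp only [smul_mk, mul_assoc]

instance : ContinuousSMul G (Quot α.rel) where
  continuous_smul := (IsOpenQuotientMap.id.prodMap α.isOpenQuotientMap_mk).continuous_comp_iff.1 <|
    continuous_quot_mk.comp (by fun_prop : Continuous fun p : G × (G × X) => (p.1 * p.2.1, p.2.2))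

end TopPartialAction

/-- On the quotient `X̃ = (G × X)/∼` (with the quotient topology), the prescription
`α̃_s (q (t, x)) = q (s * t, x)` is well defined and yields a continuous (jointly
continuous) global action of `G` on `X̃`. -/
theorem TopPartialAction.exists_enveloping_action {G X : Type*} [Group G] [TopologicalSpace G]
    [IsTopologicalGroup G] [TopologicalSpace X] (α : TopPartialAction G X) :
    ∃ β : G → Quot α.rel → Quot α.rel,
      (∀ s t x, β s (Quot.mk α.rel (t, x)) = Quot.mk α.rel (s * t, x)) ∧
      Continuous (fun p : G × Quot α.rel => β p.1 p.2) ∧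
      (∀ y, β 1 y = y) ∧
      (∀ s t y, β s (β t y) = β (s * t) y) :=
  ⟨(· • ·), fun s t x => α.smul_mk s (t, x), continuous_smul, one_smul G,
    fun s t y => (mul_smul s t y).symm⟩
end

section
/- Let G be a locally compact Hausdorff group, let α = ({D_t}_{t∈G}, {α_t}_{t∈G}) be a partial action of G on a C*-algebra A, and let (β, B, ι_B) and (γ, C, ι_C) be two enveloping actions of α: β and γ are continuous actions of G on C*-algebras B and C; ι_B : A → B and ι_C : A → C are injective *-homomorphisms whose ranges are closed two-sided ideals; for every t ∈ G one has ι_B(D_t) = ι_B(A) ∩ β_t(ι_B(A)), ι_C(D_t) = ι_C(A) ∩ γ_t(ι_C(A)), and β_t(ι_B(a)) = ι_B(α_t(a)), γ_t(ι_C(a)) = ι_C(α_t(a)) for all a ∈ D_{t⁻¹}; and the closed linear span of {β_t(ι_B(a)) : t ∈ G, a ∈ A} is B, while the closed linear span of {γ_t(ι_C(a)) : t ∈ G, a ∈ A} is C. Then there exists a unique *-isomorphism φ : B → C such that φ ∘ β_t = γ_t ∘ φ for every t ∈ G and φ(ι_B(a)) = ι_C(a) for every a ∈ A. -/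
/-! Let `Δ ⊆ B × C` be the closed *-subalgebra generated by the pairs
`(β t (ιB a), γ t (ιC a))`. A product `β s (ιB a') * β t (ιB a)` equals `β t (ιB d)` for an
element `d ∈ D_{t⁻¹s}` whose right action on `D_{t⁻¹s}` is prescribed by `α`, so the same `d`
works in `C`. Hence right multiplication by a generator maps `Δ` into pairs
`(β t (ιB d), γ t (ιC d))`, whose two coordinates both have norm `‖d‖`. By continuity and the
density of the orbits, an element of `Δ` has zero first coordinate iff it has zero second
coordinate, so both projections of `Δ` are injective *-homomorphisms of C*-algebras, hence
isometric, hence onto. Then `φ = π_C ∘ π_B⁻¹` (whose graph is `Δ`) is the required isomorphism,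
and it is unique because the orbit of `ιB A` spans a dense subspace of `B`. -/

/-- A partial action of a topological group `G` on a (not necessarily unital) C*-algebra
`A`: a family of closed two-sided ideals `dom t` together with maps `act t` restricting
to *-isomorphisms `dom t⁻¹ → dom t`, such that `dom 1 = A`, `act 1 = id`,
`act (s * t)` extends `act s ∘ act t`, the family of ideals is continuous (every open
set hits an open set of indices), and `(t, x) ↦ act t x` is continuous. -/
structure CStarPartialAction (G A : Type*) [Group G] [TopologicalSpace G]
    [NonUnitalNormedRing A] [StarRing A] [NormedSpace ℂ A] where
  dom : G → Set A
  act : G → A → A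
  isClosed_dom : ∀ t, IsClosed (dom t)
  zero_mem : ∀ t, (0 : A) ∈ dom t
  add_mem : ∀ t, ∀ x ∈ dom t, ∀ y ∈ dom t, x + y ∈ dom t
  smul_mem : ∀ t (c : ℂ), ∀ x ∈ dom t, c • x ∈ dom t
  mul_mem_left : ∀ t (a : A), ∀ x ∈ dom t, a * x ∈ dom t
  mul_mem_right : ∀ t (a : A), ∀ x ∈ dom t, x * a ∈ dom t
  bijOn : ∀ t, Set.BijOn (act t) (dom t⁻¹) (dom t)
  act_add : ∀ t, ∀ x ∈ dom t⁻¹, ∀ y ∈ dom t⁻¹, act t (x + y) = act t x + act t y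
  act_smul : ∀ t (c : ℂ), ∀ x ∈ dom t⁻¹, act t (c • x) = c • act t x
  act_mul : ∀ t, ∀ x ∈ dom t⁻¹, ∀ y ∈ dom t⁻¹, act t (x * y) = act t x * act t y
  act_star : ∀ t, ∀ x ∈ dom t⁻¹, act t (star x) = star (act t x)
  dom_one : dom 1 = Set.univ
  act_one : ∀ x, act 1 x = x
  act_comp : ∀ s t x, x ∈ dom t⁻¹ → act t x ∈ dom s⁻¹ →
    x ∈ dom (s * t)⁻¹ ∧ act (s * t) x = act s (act t x)
  isOpen_hit : ∀ U : Set A, IsOpen U → IsOpen {t : G | (U ∩ dom t).Nonempty}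
  continuousOn : ContinuousOn (fun p : G × A => act p.1 p.2) {p : G × A | p.2 ∈ dom p.1⁻¹}

/-- A continuous (global) action of a topological group `G` on a C*-algebra `B` by
*-automorphisms: each `β t` is a *-homomorphism, `β 1 = id`, `β s ∘ β t = β (s * t)`
(so each `β t` is bijective), and `t ↦ β t b` is continuous for every `b`. -/
def IsContCStarAction (G B : Type*) [Group G] [TopologicalSpace G]
    [NonUnitalNormedRing B] [StarRing B] [NormedSpace ℂ B] (β : G → B → B) : Prop :=
  (∀ t (x y : B), β t (x + y) = β t x + β t y) ∧
  (∀ t (c : ℂ) (x : B), β t (c • x) = c • β t x) ∧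
  (∀ t (x y : B), β t (x * y) = β t x * β t y) ∧
  (∀ t (x : B), β t (star x) = star (β t x)) ∧
  (∀ x : B, β 1 x = x) ∧
  (∀ s t (x : B), β s (β t x) = β (s * t) x) ∧
  (∀ x : B, Continuous fun t => β t x)


open scoped CStarAlgebra

theorem NonUnitalStarAlgebra.adjoin_toSubmodule_eq_span {R A : Type*} [CommSemiring R]
    [StarRing R] [NonUnitalSemiring A] [StarRing A] [Module R A] [IsScalarTower R A A]
    [SMulCommClass R A A] [StarModule R A] {s : Set A}
    (hmul : ∀ x ∈ s, ∀ y ∈ s, x * y ∈ s) (hstar : ∀ x ∈ s, star x ∈ s) :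
    (adjoin R s).toSubmodule = Submodule.span R s := by
  rw [adjoin_eq_span, Set.union_eq_left.mpr fun x hx => by simpa using hstar _ hx]
  exact congrArg _ <| congrArg SetLike.coe <|
    Subsemigroup.closure_eq ⟨s, fun ha hb => hmul _ ha _ hb⟩

section CStarAlgebra

variable {A B : Type*} [NonUnitalCStarAlgebra A] [NonUnitalCStarAlgebra B]

theorem CStarRing.eq_zero_of_forall_mul_eq_zero {s : Set A}
    (hs : Dense (Submodule.span ℂ s : Set A)) {x : A} (hx : ∀ y ∈ s, x * y = 0) : x = 0 := by
  have hker : ∀ y, x * y = 0 :=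
    hs.induction (Submodule.span_le (p := LinearMap.ker (LinearMap.mulLeft ℂ x)).mpr hx)
      (isClosed_eq (continuous_const_mul x) continuous_const)
  exact (CStarRing.mul_star_self_eq_zero_iff x).mp (hker (star x))

theorem NonUnitalStarAlgHom.surjective_of_dense_span {f : A →⋆ₙₐ[ℂ] B}
    (hf : Function.Injective f) {s : Set B} (hs : Dense (Submodule.span ℂ s : Set B))
    (hsf : s ⊆ Set.range f) : Function.Surjective f := by
  have hspan : (Submodule.span ℂ s : Set B) ⊆ Set.range f :=
    Submodule.span_le (p := LinearMap.range (f : A →ₗ[ℂ] B)) |>.mpr hsf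
  rw [← Set.range_eq_univ, ← (hs.mono hspan).closure_eq,
    (NonUnitalStarAlgHom.isometry f hf).isClosedEmbedding.isClosed_range.closure_eq]

theorem NonUnitalStarAlgHom.ext_of_dense_span {s : Set A}
    (hs : Dense (Submodule.span ℂ s : Set A)) {f g : A →⋆ₙₐ[ℂ] B} (h : Set.EqOn f g s) :
    f = g :=
  DFunLike.coe_injective <| (map_continuous f).ext_on hs (map_continuous g)
    (LinearMap.eqOn_span' (f := (f : A →ₗ[ℂ] B)) (g := g) h)

end CStarAlgebra

namespace IsContCStarAction

variable {G B : Type*} [Group G] [TopologicalSpace G] [NonUnitalNormedRing B] [StarRing B]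
  [NormedSpace ℂ B] {β : G → B → B}

theorem one_apply (hβ : IsContCStarAction G B β) (x : B) : β 1 x = x := hβ.2.2.2.2.1 x

theorem apply_apply (hβ : IsContCStarAction G B β) (s t : G) (x : B) :
    β s (β t x) = β (s * t) x :=
  hβ.2.2.2.2.2.1 s t x

theorem map_mul (hβ : IsContCStarAction G B β) (t : G) (x y : B) :
    β t (x * y) = β t x * β t y :=
  hβ.2.2.1 t x y

theorem apply_inv_apply (hβ : IsContCStarAction G B β) (t : G) (x : B) : β t (β t⁻¹ x) = x := by
  rw [hβ.apply_apply, mul_inv_cancel, hβ.one_apply]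

theorem inv_apply_apply (hβ : IsContCStarAction G B β) (t : G) (x : B) : β t⁻¹ (β t x) = x := by
  rw [hβ.apply_apply, inv_mul_cancel, hβ.one_apply]

def toStarAlgEquiv (hβ : IsContCStarAction G B β) (t : G) : B ≃⋆ₐ[ℂ] B where
  toFun := β t
  invFun := β t⁻¹
  left_inv := hβ.inv_apply_apply t
  right_inv := hβ.apply_inv_apply t
  map_add' := hβ.1 t
  map_mul' := hβ.map_mul t
  map_star' := hβ.2.2.2.1 t
  map_smul' := hβ.2.1 t

@[simp]
theorem coe_toStarAlgEquiv (hβ : IsContCStarAction G B β) (t : G) :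
    ⇑(hβ.toStarAlgEquiv t) = β t :=
  rfl

end IsContCStarAction

theorem CStarPartialAction.sub_mem_dom {G A : Type*} [Group G] [TopologicalSpace G]
    [NonUnitalNormedRing A] [StarRing A] [NormedSpace ℂ A] (α : CStarPartialAction G A) {t : G}
    {x y : A} (hx : x ∈ α.dom t) (hy : y ∈ α.dom t) : x - y ∈ α.dom t := by
  simpa [sub_eq_add_neg] using α.add_mem t x hx _ (α.smul_mem t (-1) y hy)

namespace CStarPartialAction

variable {G A B : Type*} [Group G] [TopologicalSpace G]
  [NonUnitalCStarAlgebra A] [NonUnitalCStarAlgebra B]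

structure IsEnvelopingAction (α : CStarPartialAction G A) (β : G → B → B)
    (ι : A →⋆ₙₐ[ℂ] B) : Prop where
  isContCStarAction : IsContCStarAction G B β
  injective : Function.Injective ι
  mul_mem_range : ∀ b : B, ∀ x ∈ Set.range ι, b * x ∈ Set.range ι
  mem_range_mul : ∀ b : B, ∀ x ∈ Set.range ι, x * b ∈ Set.range ι
  image_dom : ∀ t, ι '' α.dom t = Set.range ι ∩ (β t '' Set.range ι)
  map_act : ∀ t, ∀ a ∈ α.dom t⁻¹, β t (ι a) = ι (α.act t a)
  dense_span : Dense (Submodule.span ℂ {x : B | ∃ t a, x = β t (ι a)} : Set B)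

namespace IsEnvelopingAction

variable {α : CStarPartialAction G A} {β : G → B → B} {ι : A →⋆ₙₐ[ℂ] B}

theorem star_mem_dom (h : α.IsEnvelopingAction β ι) {t : G} {a : A} (ha : a ∈ α.dom t) :
    star a ∈ α.dom t := by
  obtain ⟨-, -, ⟨b, rfl⟩, hb⟩ := h.image_dom t ▸ Set.mem_image_of_mem ι ha
  have hstar : ι (star a) ∈ ι '' α.dom t := by
    rw [h.image_dom]
    refine ⟨⟨star a, rfl⟩, ι (star b), ⟨star b, rfl⟩, ?_⟩
    simpa [hb, map_star ι] using map_star (h.isContCStarAction.toStarAlgEquiv t) (ι b)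
  obtain ⟨a', ha', he⟩ := hstar
  rwa [← h.injective he]

theorem eq_of_forall_mul_eq (h : α.IsEnvelopingAction β ι) {t : G} {d d' : A}
    (hd : d ∈ α.dom t) (hd' : d' ∈ α.dom t) (he : ∀ e ∈ α.dom t, d * e = d' * e) :
    d = d' := by
  have hstar := h.star_mem_dom (α.sub_mem_dom hd hd')
  rw [← sub_eq_zero, ← CStarRing.mul_star_self_eq_zero_iff, sub_mul, he _ hstar, sub_self]

theorem exists_mem_dom_eq_mul (h : α.IsEnvelopingAction β ι) (r : G) (a' a : A) :
    ∃ d ∈ α.dom r, ι d = β r (ι a') * ι a ∧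
      ∀ x ∈ α.dom r, d * x = α.act r (a' * α.act r⁻¹ (a * x)) := by
  have hβ := h.isContCStarAction
  have hmem : β r (ι a') * ι a ∈ ι '' α.dom r := by
    rw [h.image_dom]
    refine ⟨h.mul_mem_range _ _ ⟨a, rfl⟩, ι a' * β r⁻¹ (ι a), h.mem_range_mul _ _ ⟨a', rfl⟩, ?_⟩
    rw [hβ.map_mul, hβ.apply_inv_apply]
  obtain ⟨d, hd, hde⟩ := hmem
  refine ⟨d, hd, hde, fun x hx => h.injective ?_⟩
  have hax : a * x ∈ α.dom r⁻¹⁻¹ := by rw [inv_inv]; exact α.mul_mem_left r a x hx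
  have hmem' : a' * α.act r⁻¹ (a * x) ∈ α.dom r⁻¹ :=
    α.mul_mem_left _ a' _ ((α.bijOn r⁻¹).mapsTo hax)
  calc ι (d * x) = β r (ι a') * ι (a * x) := by rw [map_mul, hde, map_mul, mul_assoc]
    _ = β r (ι a' * β r⁻¹ (ι (a * x))) := by rw [hβ.map_mul, hβ.apply_inv_apply]
    _ = ι (α.act r (a' * α.act r⁻¹ (a * x))) := by
      rw [h.map_act _ _ hax, ← map_mul, h.map_act _ _ hmem']

section TwoEnvelopingActions

variable {C : Type*} [NonUnitalCStarAlgebra C] {γ : G → C → C} {ιB : A →⋆ₙₐ[ℂ] B}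
  {ιC : A →⋆ₙₐ[ℂ] C}

theorem exists_mul_eq (hB : α.IsEnvelopingAction β ιB) (hC : α.IsEnvelopingAction γ ιC)
    (s t : G) (a' a : A) :
    ∃ d, β s (ιB a') * β t (ιB a) = β t (ιB d) ∧ γ s (ιC a') * γ t (ιC a) = γ t (ιC d) := by
  obtain ⟨d, hd, hdB, hdα⟩ := hB.exists_mem_dom_eq_mul (t⁻¹ * s) a' a
  obtain ⟨d', hd', hdC, hd'α⟩ := hC.exists_mem_dom_eq_mul (t⁻¹ * s) a' a
  -- `d` is determined by its right action on `D_{t⁻¹s}`, which `α` alone prescribes.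
  obtain rfl : d = d' := hB.eq_of_forall_mul_eq hd hd' fun e he => by rw [hdα e he, hd'α e he]
  have hβ := hB.isContCStarAction
  have hγ := hC.isContCStarAction
  refine ⟨d, ?_, ?_⟩
  · rw [hdB, hβ.map_mul, hβ.apply_apply, mul_inv_cancel_left]
  · rw [hdC, hγ.map_mul, hγ.apply_apply, mul_inv_cancel_left]

variable (hB : α.IsEnvelopingAction β ιB) (hC : α.IsEnvelopingAction γ ιC)

def orbitMap (t : G) : A →⋆ₙₐ[ℂ] B × C :=
  ((hB.isContCStarAction.toStarAlgEquiv t : B →⋆ₙₐ[ℂ] B).comp ιB).prod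
    ((hC.isContCStarAction.toStarAlgEquiv t : C →⋆ₙₐ[ℂ] C).comp ιC)

@[simp]
theorem orbitMap_apply (t : G) (a : A) : hB.orbitMap hC t a = (β t (ιB a), γ t (ιC a)) := rfl

def jointOrbit : Set (B × C) := {q | ∃ t a, q = hB.orbitMap hC t a}

theorem orbitMap_mul_orbitMap_mem_range (s t : G) (a' a : A) :
    hB.orbitMap hC s a' * hB.orbitMap hC t a ∈ NonUnitalStarAlgHom.range (hB.orbitMap hC t) :=
  let ⟨d, hdB, hdC⟩ := hB.exists_mul_eq hC s t a' a
  (NonUnitalStarAlgHom.mem_range _).mpr ⟨d, by simp [hdB, hdC]⟩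

theorem adjoin_jointOrbit_toSubmodule :
    (NonUnitalStarAlgebra.adjoin ℂ (hB.jointOrbit hC)).toSubmodule =
      Submodule.span ℂ (hB.jointOrbit hC) := by
  refine NonUnitalStarAlgebra.adjoin_toSubmodule_eq_span ?_ ?_
  · rintro _ ⟨s, a', rfl⟩ _ ⟨t, a, rfl⟩
    obtain ⟨d, hd⟩ :=
      (NonUnitalStarAlgHom.mem_range _).mp (hB.orbitMap_mul_orbitMap_mem_range hC s t a' a)
    exact ⟨t, d, hd.symm⟩
  · rintro _ ⟨t, a, rfl⟩
    exact ⟨t, star a, (map_star _ a).symm⟩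

theorem mul_orbitMap_mem_range {q : B × C}
    (hq : q ∈ NonUnitalStarAlgebra.adjoin ℂ (hB.jointOrbit hC)) (t : G) (a : A) :
    q * hB.orbitMap hC t a ∈ NonUnitalStarAlgHom.range (hB.orbitMap hC t) := by
  have hspan : Submodule.span ℂ (hB.jointOrbit hC) ≤
      (NonUnitalStarAlgHom.range (hB.orbitMap hC t)).toSubmodule.comap
        (LinearMap.mulRight ℂ (hB.orbitMap hC t a)) := by
    rw [Submodule.span_le]
    rintro _ ⟨s, a', rfl⟩
    exact hB.orbitMap_mul_orbitMap_mem_range hC s t a' a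
  exact hspan (by rwa [← adjoin_jointOrbit_toSubmodule])

def graph : NonUnitalStarSubalgebra ℂ (B × C) :=
  (NonUnitalStarAlgebra.adjoin ℂ (hB.jointOrbit hC)).topologicalClosure

instance : IsClosed (hB.graph hC : Set (B × C)) :=
  NonUnitalStarSubalgebra.isClosed_topologicalClosure _

theorem orbitMap_mem_graph (t : G) (a : A) : hB.orbitMap hC t a ∈ hB.graph hC :=
  NonUnitalStarSubalgebra.le_topologicalClosure _
    (NonUnitalStarAlgebra.subset_adjoin ℂ _ ⟨t, a, rfl⟩)

theorem norm_fst_mul_orbitMap_eq_norm_snd {p : B × C} (hp : p ∈ hB.graph hC) (t : G) (a : A) :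
    ‖(p * hB.orbitMap hC t a).1‖ = ‖(p * hB.orbitMap hC t a).2‖ := by
  refine closure_minimal (fun q hq => ?_) (isClosed_eq
    (continuous_fst.comp (continuous_mul_const _)).norm
    (continuous_snd.comp (continuous_mul_const _)).norm) hp
  obtain ⟨d, hd⟩ := (NonUnitalStarAlgHom.mem_range _).mp (hB.mul_orbitMap_mem_range hC hq t a)
  change ‖(q * _).1‖ = ‖(q * _).2‖
  rw [← hd, orbitMap_apply,
    ← IsContCStarAction.coe_toStarAlgEquiv hB.isContCStarAction,
    ← IsContCStarAction.coe_toStarAlgEquiv hC.isContCStarAction,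
    StarAlgEquiv.norm_map, StarAlgEquiv.norm_map,
    NonUnitalStarAlgHom.norm_map ιB hB.injective, NonUnitalStarAlgHom.norm_map ιC hC.injective]

theorem fst_eq_zero_iff {p : B × C} (hp : p ∈ hB.graph hC) : p.1 = 0 ↔ p.2 = 0 := by
  have hnorm := hB.norm_fst_mul_orbitMap_eq_norm_snd hC hp
  constructor
  · refine fun h => CStarRing.eq_zero_of_forall_mul_eq_zero hC.dense_span ?_
    rintro _ ⟨t, a, rfl⟩
    simpa [h] using (hnorm t a).symm
  · refine fun h => CStarRing.eq_zero_of_forall_mul_eq_zero hB.dense_span ?_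
    rintro _ ⟨t, a, rfl⟩
    simpa [h] using hnorm t a

def graphFst : hB.graph hC →⋆ₙₐ[ℂ] B :=
  (NonUnitalStarAlgHom.fst ℂ B C).comp (NonUnitalStarSubalgebraClass.subtype _)

def graphSnd : hB.graph hC →⋆ₙₐ[ℂ] C :=
  (NonUnitalStarAlgHom.snd ℂ B C).comp (NonUnitalStarSubalgebraClass.subtype _)

theorem graphFst_injective : Function.Injective (hB.graphFst hC) :=
  (injective_iff_map_eq_zero _).mpr fun p hp =>
    Subtype.ext (Prod.ext hp ((hB.fst_eq_zero_iff hC p.2).mp hp))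

theorem graphSnd_injective : Function.Injective (hB.graphSnd hC) :=
  (injective_iff_map_eq_zero _).mpr fun p hp =>
    Subtype.ext (Prod.ext ((hB.fst_eq_zero_iff hC p.2).mpr hp) hp)

theorem graphFst_surjective : Function.Surjective (hB.graphFst hC) :=
  NonUnitalStarAlgHom.surjective_of_dense_span (hB.graphFst_injective hC) hB.dense_span
    fun _ ⟨t, a, hx⟩ => ⟨⟨_, hB.orbitMap_mem_graph hC t a⟩, hx.symm⟩

theorem graphSnd_surjective : Function.Surjective (hB.graphSnd hC) :=
  NonUnitalStarAlgHom.surjective_of_dense_span (hB.graphSnd_injective hC) hC.dense_span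
    fun _ ⟨t, a, hx⟩ => ⟨⟨_, hB.orbitMap_mem_graph hC t a⟩, hx.symm⟩

noncomputable def starAlgEquiv : B ≃⋆ₐ[ℂ] C :=
  (StarAlgEquiv.ofBijective (hB.graphFst hC)
      ⟨hB.graphFst_injective hC, hB.graphFst_surjective hC⟩).symm.trans
    (StarAlgEquiv.ofBijective (hB.graphSnd hC)
      ⟨hB.graphSnd_injective hC, hB.graphSnd_surjective hC⟩)

theorem starAlgEquiv_apply_fst {p : B × C} (hp : p ∈ hB.graph hC) :
    hB.starAlgEquiv hC p.1 = p.2 := by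
  have hsymm : (StarAlgEquiv.ofBijective (hB.graphFst hC)
      ⟨hB.graphFst_injective hC, hB.graphFst_surjective hC⟩).symm p.1 = ⟨p, hp⟩ :=
    StarAlgEquiv.symm_apply_eq _ |>.mpr rfl
  simp [starAlgEquiv, hsymm, graphSnd]

theorem starAlgEquiv_apply_orbit (t : G) (a : A) :
    hB.starAlgEquiv hC (β t (ιB a)) = γ t (ιC a) :=
  hB.starAlgEquiv_apply_fst hC (hB.orbitMap_mem_graph hC t a)

theorem starAlgEquiv_apply_apply (t : G) (b : B) :
    hB.starAlgEquiv hC (β t b) = γ t (hB.starAlgEquiv hC b) := by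
  have hβ := hB.isContCStarAction
  have hγ := hC.isContCStarAction
  let φ : B →⋆ₙₐ[ℂ] C := hB.starAlgEquiv hC
  have := NonUnitalStarAlgHom.ext_of_dense_span hB.dense_span
    (f := φ.comp (hβ.toStarAlgEquiv t : B →⋆ₙₐ[ℂ] B))
    (g := (hγ.toStarAlgEquiv t : C →⋆ₙₐ[ℂ] C).comp φ) ?_
  · exact DFunLike.congr_fun this b
  · rintro _ ⟨s, a, rfl⟩
    simp [φ, hβ.apply_apply, hγ.apply_apply, starAlgEquiv_apply_orbit]

theorem eq_starAlgEquiv {ψ : B ≃⋆ₐ[ℂ] C} (hψ : ∀ t a, ψ (β t (ιB a)) = γ t (ιC a)) :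
    ψ = hB.starAlgEquiv hC := by
  have := NonUnitalStarAlgHom.ext_of_dense_span hB.dense_span
    (f := (ψ : B →⋆ₙₐ[ℂ] C)) (g := hB.starAlgEquiv hC) ?_
  · exact StarAlgEquiv.ext fun b => DFunLike.congr_fun this b
  · rintro _ ⟨t, a, rfl⟩
    simp [hψ, starAlgEquiv_apply_orbit]

end TwoEnvelopingActions

end IsEnvelopingAction

end CStarPartialAction

variable {G : Type*} [Group G] [TopologicalSpace G] [IsTopologicalGroup G]
  [LocallyCompactSpace G] [T2Space G]
variable {A : Type*} [NonUnitalNormedRing A] [StarRing A] [CStarRing A]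
  [NormedSpace ℂ A] [IsScalarTower ℂ A A] [SMulCommClass ℂ A A]
  [StarModule ℂ A] [CompleteSpace A]
variable {B : Type*} [NonUnitalNormedRing B] [StarRing B] [CStarRing B]
  [NormedSpace ℂ B] [IsScalarTower ℂ B B] [SMulCommClass ℂ B B]
  [StarModule ℂ B] [CompleteSpace B]
variable {C : Type*} [NonUnitalNormedRing C] [StarRing C] [CStarRing C]
  [NormedSpace ℂ C] [IsScalarTower ℂ C C] [SMulCommClass ℂ C C]
  [StarModule ℂ C] [CompleteSpace C]


theorem CStarPartialAction.enveloping_unique_general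
    (α : CStarPartialAction G A)
    (β : G → B → B) (hβ : IsContCStarAction G B β)
    (γ : G → C → C) (hγ : IsContCStarAction G C γ)
    (ιB : A →⋆ₙₐ[ℂ] B) (ιC : A →⋆ₙₐ[ℂ] C)
    (hιB_inj : Function.Injective ιB) (hιC_inj : Function.Injective ιC)
    (hιB_left : ∀ b : B, ∀ x ∈ Set.range ιB, b * x ∈ Set.range ιB)
    (hιB_right : ∀ b : B, ∀ x ∈ Set.range ιB, x * b ∈ Set.range ιB)
    (hιC_left : ∀ c : C, ∀ x ∈ Set.range ιC, c * x ∈ Set.range ιC)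
    (hιC_right : ∀ c : C, ∀ x ∈ Set.range ιC, x * c ∈ Set.range ιC)
    (hB_dom : ∀ t, ιB '' α.dom t = Set.range ιB ∩ (β t '' Set.range ιB))
    (hC_dom : ∀ t, ιC '' α.dom t = Set.range ιC ∩ (γ t '' Set.range ιC))
    (hB_res : ∀ t, ∀ a ∈ α.dom t⁻¹, β t (ιB a) = ιB (α.act t a))
    (hC_res : ∀ t, ∀ a ∈ α.dom t⁻¹, γ t (ιC a) = ιC (α.act t a))
    (hB_dense : closure (Submodule.span ℂ {x : B | ∃ t a, x = β t (ιB a)} : Set B)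
      = Set.univ)
    (hC_dense : closure (Submodule.span ℂ {x : C | ∃ t a, x = γ t (ιC a)} : Set C)
      = Set.univ) :
    ∃! φ : B ≃⋆ₐ[ℂ] C,
      (∀ (t : G) (b : B), φ (β t b) = γ t (φ b)) ∧ ∀ a : A, φ (ιB a) = ιC a := by
  let _ : NonUnitalCStarAlgebra A := {}
  let _ : NonUnitalCStarAlgebra B := {}
  let _ : NonUnitalCStarAlgebra C := {}
  have hB : α.IsEnvelopingAction β ιB := ⟨hβ, hιB_inj, hιB_left, hιB_right, hB_dom, hB_res,
    dense_iff_closure_eq.mpr hB_dense⟩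
  have hC : α.IsEnvelopingAction γ ιC := ⟨hγ, hιC_inj, hιC_left, hιC_right, hC_dom, hC_res,
    dense_iff_closure_eq.mpr hC_dense⟩
  refine ⟨hB.starAlgEquiv hC, ⟨hB.starAlgEquiv_apply_apply hC, fun a => ?_⟩, ?_⟩
  · simpa [hβ.one_apply, hγ.one_apply] using hB.starAlgEquiv_apply_orbit hC 1 a
  · rintro ψ ⟨hψβ, hψι⟩
    exact hB.eq_starAlgEquiv hC fun t a => by rw [hψβ, hψι]

/-- Uniqueness of the enveloping action of a partial action on a C*-algebra: if
`(β, B, ι_B)` and `(γ, C, ι_C)` are two enveloping actions of the partial action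
`(α, A)` (so `A` sits as a closed two-sided ideal, the global action restricts to `α`,
and the closed linear span of the orbit of `A` is everything), then there is a unique
*-isomorphism `φ : B ≃ C` intertwining `β` and `γ` and restricting to the identity
on `A`. -/
theorem CStarPartialAction.enveloping_unique
    (α : CStarPartialAction G A)
    (β : G → B → B) (hβ : IsContCStarAction G B β)
    (γ : G → C → C) (hγ : IsContCStarAction G C γ)
    (ιB : A →⋆ₙₐ[ℂ] B) (ιC : A →⋆ₙₐ[ℂ] C)
    (hιB_inj : Function.Injective ιB) (hιC_inj : Function.Injective ιC)
    (hιB_closed : IsClosed (Set.range ιB)) (hιC_closed : IsClosed (Set.range ιC))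
    (hιB_left : ∀ b : B, ∀ x ∈ Set.range ιB, b * x ∈ Set.range ιB)
    (hιB_right : ∀ b : B, ∀ x ∈ Set.range ιB, x * b ∈ Set.range ιB)
    (hιC_left : ∀ c : C, ∀ x ∈ Set.range ιC, c * x ∈ Set.range ιC)
    (hιC_right : ∀ c : C, ∀ x ∈ Set.range ιC, x * c ∈ Set.range ιC)
    (hB_dom : ∀ t, ιB '' α.dom t = Set.range ιB ∩ (β t '' Set.range ιB))
    (hC_dom : ∀ t, ιC '' α.dom t = Set.range ιC ∩ (γ t '' Set.range ιC))
    (hB_res : ∀ t, ∀ a ∈ α.dom t⁻¹, β t (ιB a) = ιB (α.act t a))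
    (hC_res : ∀ t, ∀ a ∈ α.dom t⁻¹, γ t (ιC a) = ιC (α.act t a))
    (hB_dense : closure (Submodule.span ℂ {x : B | ∃ t a, x = β t (ιB a)} : Set B)
      = Set.univ)
    (hC_dense : closure (Submodule.span ℂ {x : C | ∃ t a, x = γ t (ιC a)} : Set C)
      = Set.univ) :
    ∃! φ : B ≃⋆ₐ[ℂ] C,
      (∀ (t : G) (b : B), φ (β t b) = γ t (φ b)) ∧ ∀ a : A, φ (ιB a) = ιC a :=
  CStarPartialAction.enveloping_unique_general α β hβ γ hγ ιB ιC hιB_inj hιC_inj hιB_left hιB_right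
    hιC_left hιC_right hB_dom hC_dom hB_res hC_res hB_dense hC_dense
end
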